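/- arXiv:0801.0884 — 2 statements merged into one kernel-verified Lean document; each statement's English description precedes it below -/
import Mathlib

section
/- Let k ≥ 1 be an integer, let α be real with 0 < α < 1, and let s be a complex number that is not an integer ≤ 1. Then the series below converges and ζ(s, α) = Σ_{n=0}^{k−1} (n+α)^{−s} + (ζ(s) − Σ_{ℓ=1}^{k−1} ℓ^{−s}) + Σ_{n=1}^{∞} ((−α)^n / n!) · (s)_n · (ζ(s+n) − Σ_{ℓ=1}^{k−1} ℓ^{−(s+n)}), where empty sums are zero. -/
/-!
For `re s > 1`, expand each `(m + α)^(-s)`, `m ≥ k`, in its binomial series in `α`, which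
converges because `α < 1 ≤ m`; the double series converges absolutely, and summing it the other
way round turns the inner sums into the zeta tails `ζ(s + n) - ∑_{ℓ < k} ℓ^(-(s + n))`.
These tails are `O(k^(-n))` locally uniformly in `s`, and `∑ α^n (R)_n / (n! k^n)` with
`R ≥ ‖s‖` converges (again a binomial series, since `α < k`), so the series converges locally uniformly on `ℂ` and
is holomorphic away from the poles `s = 1 - n`. Both sides are therefore holomorphic on the
connected set `ℂ ∖ {…, -1, 0, 1}`, and the identity extends from `re s > 1` by analytic
continuation.
-/

open Complex Finset HurwitzZeta
open Filter Topology Metric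
open scoped Nat

lemma Ring.choose_neg_eq_prod_div_factorial {R : Type*} [Field R] [CharZero R] (r : R) (n : ℕ) :
    Ring.choose (-r) n = (-1) ^ n * (∏ j ∈ range n, (r + j)) / n ! := by
  rw [Ring.choose_eq_smul, ← Polynomial.aeval_eq_smeval, Polynomial.aeval_def,
    ← Polynomial.eval_map, algebraMap_int_eq, descPochhammer_map,
    descPochhammer_eval_eq_prod_range, smul_eq_mul, inv_mul_eq_div, ← card_range n,
    ← prod_const, card_range, ← prod_mul_distrib]
  exact congrArg (· / _) (prod_congr rfl fun j _ => by ring)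

lemma Complex.ofReal_mul_cpow {x : ℝ} (hx : 0 < x) {w : ℂ} (hw : w ≠ 0) (r : ℂ) :
    ((x : ℂ) * w) ^ r = (x : ℂ) ^ r * w ^ r := by
  have hx' : (x : ℂ) ≠ 0 := ofReal_ne_zero.2 hx.ne'
  rw [cpow_def_of_ne_zero (mul_ne_zero hx' hw), log_ofReal_mul hx hw, add_mul, exp_add,
    ofReal_log hx.le, ← cpow_def_of_ne_zero hx', ← cpow_def_of_ne_zero hw]

lemma Complex.hasSum_add_cpow_neg {x : ℝ} {z : ℂ} (hz : ‖z‖ < x) (s : ℂ) :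
    HasSum (fun n : ℕ => (-z) ^ n / n ! * (∏ j ∈ range n, (s + j)) * (x : ℂ) ^ (-(s + n)))
      (((x : ℂ) + z) ^ (-s)) := by
  have hx : 0 < x := (norm_nonneg z).trans_lt hz
  have hx' : (x : ℂ) ≠ 0 := ofReal_ne_zero.2 hx.ne'
  have hzx : ‖z / x‖ < 1 := by
    rwa [norm_div, norm_real, Real.norm_of_nonneg hx.le, div_lt_one hx]
  have hbin := (one_add_cpow_hasFPowerSeriesOnBall_zero (a := -s)).hasSum
    (y := z / x) (by rwa [mem_eball, edist_zero_right, ← ofReal_norm, ENNReal.ofReal_lt_one])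
  rw [zero_add] at hbin
  have hsplit : (x : ℂ) + z = x * (1 + z / x) := by field_simp
  rw [hsplit, ofReal_mul_cpow hx (slitPlane_ne_zero (mem_slitPlane_of_norm_lt_one hzx))]
  refine (hbin.mul_left ((x : ℂ) ^ (-s))).congr_fun fun n => ?_
  simp only [binomialSeries_apply, List.ofFn_const, List.prod_replicate, smul_eq_mul,
    Ring.choose_neg_eq_prod_div_factorial, div_pow]
  rw [neg_add, cpow_add _ _ hx', cpow_neg _ (n : ℂ), cpow_natCast]
  field_simp
  ring

lemma summable_pow_div_factorial_mul_prod_div_pow {a x : ℝ} (h : |a| < x) (r : ℝ) :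
    Summable (fun n : ℕ => a ^ n / n ! * (∏ j ∈ range n, (r + j)) / x ^ n) := by
  have hx : 0 < x := (abs_nonneg a).trans_lt h
  have hx' : (x : ℂ) ≠ 0 := ofReal_ne_zero.2 hx.ne'
  have hxr : (x : ℂ) ^ (r : ℂ) ≠ 0 := cpow_ne_zero_iff.2 (Or.inl hx')
  have hsum := ((hasSum_add_cpow_neg (z := -(a : ℂ)) (by simpa using h) r).summable).mul_left
    ((x : ℂ) ^ (r : ℂ))
  refine Complex.summable_ofReal.mp (hsum.congr fun n => ?_)
  rw [neg_add, cpow_add _ _ hx', cpow_neg, cpow_neg _ (n : ℂ), cpow_natCast, neg_neg]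
  push_cast
  field_simp [hxr]

lemma Complex.isOpen_compl_image_intCast (S : Set ℤ) : IsOpen ((Int.cast '' S : Set ℂ)ᶜ) :=
  (isClosedEmbedding_intCast.isClosedMap _ (isClosed_discrete S)).isOpen_compl

lemma Complex.isPreconnected_compl_image_intCast (S : Set ℤ) :
    IsPreconnected ((Int.cast '' S : Set ℂ)ᶜ) :=
  ((S.to_countable.image _).isConnected_compl_of_one_lt_rank
    (by rw [rank_real_complex]; norm_num)).isPreconnected

lemma Complex.norm_prod_add_natCast_le {s : ℂ} {R : ℝ} (hs : ‖s‖ ≤ R) (n : ℕ) :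
    ‖∏ j ∈ range n, (s + j)‖ ≤ ∏ j ∈ range n, (R + j) := by
  rw [norm_prod]
  exact prod_le_prod (fun _ _ => norm_nonneg _) fun j _ =>
    (norm_add_le _ _).trans (by rw [norm_natCast]; linarith)

lemma Complex.norm_natCast_cpow_neg_add_le {k : ℕ} (hk : 1 ≤ k) (m n : ℕ) (s : ℂ) :
    ‖((m + k : ℕ) : ℂ) ^ (-(s + n))‖ ≤ ((m + k : ℕ) : ℝ) ^ (-s.re) / k ^ n := by
  have hmk : (0 : ℝ) < ((m + k : ℕ) : ℝ) := by positivity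
  rw [norm_natCast_cpow_of_pos (by omega), neg_re, add_re, natCast_re, neg_add,
    Real.rpow_add hmk, Real.rpow_neg hmk.le (n : ℝ), Real.rpow_natCast, ← div_eq_mul_inv]
  gcongr
  exact_mod_cast k.le_add_left m

namespace HurwitzZeta

noncomputable def zetaTail (k : ℕ) (w : ℂ) : ℂ :=
  riemannZeta w - ∑ ℓ ∈ Icc 1 (k - 1), (ℓ : ℂ) ^ (-w)

lemma hasSum_zetaTail {k : ℕ} (hk : 1 ≤ k) {w : ℂ} (hw : 1 < w.re) :
    HasSum (fun m : ℕ => ((m + k : ℕ) : ℂ) ^ (-w)) (zetaTail k w) := by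
  obtain ⟨k, rfl⟩ := Nat.exists_eq_add_of_le' hk
  have hζ : HasSum (fun n : ℕ => ((n + 1 : ℕ) : ℂ) ^ (-w)) (riemannZeta w) := by
    have hsum := (summable_nat_add_iff 1).mpr (Complex.summable_one_div_nat_cpow.mpr hw)
    simpa [zeta_eq_tsum_one_div_nat_add_one_cpow hw, cpow_neg] using hsum.hasSum
  have hIcc : ∑ ℓ ∈ Icc 1 k, (ℓ : ℂ) ^ (-w) = ∑ i ∈ range k, ((i + 1 : ℕ) : ℂ) ^ (-w) := by
    rw [range_eq_Ico, sum_Ico_add' (fun ℓ : ℕ => (ℓ : ℂ) ^ (-w)), Ico_add_one_right_eq_Icc]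
  rw [zetaTail, Nat.add_sub_cancel, hIcc]
  simpa only [add_assoc] using (hasSum_nat_add_iff' k).mpr hζ

lemma summable_natCast_add_rpow_neg (k : ℕ) {σ : ℝ} (hσ : 1 < σ) :
    Summable (fun m : ℕ => ((m + k : ℕ) : ℝ) ^ (-σ)) :=
  (summable_nat_add_iff k).mpr (Real.summable_nat_rpow.mpr (by linarith))

lemma norm_zetaTail_le {k : ℕ} (hk : 1 ≤ k) {σ : ℝ} (hσ : 1 < σ) {w : ℂ} (hw : σ ≤ w.re) :
    ‖zetaTail k w‖ ≤ (k : ℝ) ^ (σ - w.re) * ∑' m : ℕ, ((m + k : ℕ) : ℝ) ^ (-σ) := by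
  refine (hasSum_zetaTail hk (hσ.trans_le hw)).norm_le_of_bounded
    ((summable_natCast_add_rpow_neg k hσ).hasSum.mul_left _) fun m => ?_
  have hk0 : (0 : ℝ) < k := by exact_mod_cast hk
  have hmk : (0 : ℝ) < ((m + k : ℕ) : ℝ) := by positivity
  rw [norm_natCast_cpow_of_pos (by omega), neg_re]
  calc ((m + k : ℕ) : ℝ) ^ (-w.re)
      = ((m + k : ℕ) : ℝ) ^ (σ - w.re) * ((m + k : ℕ) : ℝ) ^ (-σ) := by
        rw [← Real.rpow_add hmk]; ring_nf
    _ ≤ (k : ℝ) ^ (σ - w.re) * ((m + k : ℕ) : ℝ) ^ (-σ) := by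
        gcongr ?_ * _
        exact Real.rpow_le_rpow_of_nonpos hk0 (by exact_mod_cast k.le_add_left m) (by linarith)

lemma differentiableAt_zetaTail (k : ℕ) {w : ℂ} (hw : w ≠ 1) :
    DifferentiableAt ℂ (zetaTail k) w := by
  refine (differentiableAt_riemannZeta hw).sub (DifferentiableAt.fun_sum fun ℓ hℓ => ?_)
  exact differentiableAt_id.neg.const_cpow
    (Or.inl (Nat.cast_ne_zero.mpr (Nat.one_le_iff_ne_zero.mp (mem_Icc.mp hℓ).1)))

/-- The `n`-th term of the Taylor expansion in `α` at `0` of `∑_{m ≥ k} (m + α)^(-s)`. -/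
noncomputable def taylorTerm (k : ℕ) (α : ℝ) (s : ℂ) (n : ℕ) : ℂ :=
  (-(α : ℂ)) ^ n / n ! * (∏ j ∈ range n, (s + j)) * zetaTail k (s + n)

lemma norm_neg_ofReal_pow_div_factorial (α : ℝ) (n : ℕ) :
    ‖(-(α : ℂ)) ^ n / (n ! : ℂ)‖ = |α| ^ n / n ! := by
  rw [norm_div, norm_pow, norm_neg, norm_real, Real.norm_eq_abs, norm_natCast]

lemma norm_taylorTerm_le {k : ℕ} (hk : 1 ≤ k) (α : ℝ) {R σ : ℝ} {s : ℂ} (hsR : ‖s‖ ≤ R)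
    (hσs : σ ≤ s.re) {n : ℕ} (hn : 2 ≤ σ + n) :
    ‖taylorTerm k α s n‖ ≤ (k : ℝ) ^ (2 - σ) * (∑' m : ℕ, ((m + k : ℕ) : ℝ) ^ (-2 : ℝ)) *
      (|α| ^ n / n ! * (∏ j ∈ range n, (R + j)) / k ^ n) := by
  set A := ∑' m : ℕ, ((m + k : ℕ) : ℝ) ^ (-2 : ℝ)
  have hk1 : (1 : ℝ) ≤ k := by exact_mod_cast hk
  have hR : 0 ≤ R := (norm_nonneg s).trans hsR
  have hζ : ‖zetaTail k (s + n)‖ ≤ (k : ℝ) ^ (2 - σ) * A / k ^ n := by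
    have hre : (s + n).re = s.re + n := by simp
    calc ‖zetaTail k (s + n)‖ ≤ (k : ℝ) ^ (2 - (s + n).re) * A :=
          norm_zetaTail_le hk one_lt_two (by rw [hre]; linarith)
      _ ≤ (k : ℝ) ^ (2 - σ - n) * A := by
          gcongr ?_ * _
          exact Real.rpow_le_rpow_of_exponent_le hk1 (by rw [hre]; linarith)
      _ = (k : ℝ) ^ (2 - σ) * A / k ^ n := by
          rw [Real.rpow_sub (by positivity), Real.rpow_natCast]; ring
  rw [taylorTerm, norm_mul, norm_mul, norm_neg_ofReal_pow_div_factorial]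
  calc |α| ^ n / n ! * ‖∏ j ∈ range n, (s + j)‖ * ‖zetaTail k (s + n)‖
      ≤ |α| ^ n / n ! * (∏ j ∈ range n, (R + j)) * ((k : ℝ) ^ (2 - σ) * A / k ^ n) := by
        gcongr
        exact norm_prod_add_natCast_le hsR n
    _ = _ := by ring

lemma exists_eventually_norm_taylorTerm_le {k : ℕ} (hk : 1 ≤ k) (α : ℝ) {R σ : ℝ} {W : Set ℂ}
    (hW : ∀ s ∈ W, ‖s‖ ≤ R ∧ σ ≤ s.re) : ∃ C, ∀ᶠ n in cofinite, ∀ s ∈ W,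
      ‖taylorTerm k α s n‖ ≤ C * (|α| ^ n / n ! * (∏ j ∈ range n, (R + j)) / k ^ n) := by
  refine ⟨(k : ℝ) ^ (2 - σ) * ∑' m : ℕ, ((m + k : ℕ) : ℝ) ^ (-2 : ℝ), ?_⟩
  rw [Nat.cofinite_eq_atTop]
  filter_upwards [eventually_ge_atTop ⌈2 - σ⌉₊] with n hn s hs
  exact norm_taylorTerm_le hk α (hW s hs).1 (hW s hs).2 (by linarith [Nat.ceil_le.mp hn])

lemma summable_taylorTerm {k : ℕ} (hk : 1 ≤ k) {α : ℝ} (hα : |α| < k) (s : ℂ) :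
    Summable (taylorTerm k α s) := by
  obtain ⟨C, hC⟩ := exists_eventually_norm_taylorTerm_le hk α (W := {s}) (R := ‖s‖) (σ := s.re)
    (by simp)
  exact ((summable_pow_div_factorial_mul_prod_div_pow (by rwa [abs_abs]) _).mul_left C
    ).of_norm_bounded_eventually (hC.mono fun n hn => hn s rfl)

lemma tendstoLocallyUniformly_taylorTerm {k : ℕ} (hk : 1 ≤ k) {α : ℝ} (hα : |α| < k) :
    TendstoLocallyUniformly (fun (t : Finset ℕ) s => ∑ n ∈ t, taylorTerm k α s n)
      (fun s => ∑' n, taylorTerm k α s n) atTop := by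
  refine tendstoLocallyUniformly_of_forall_exists_nhds fun s₀ =>
    ⟨ball s₀ 1, ball_mem_nhds s₀ one_pos, ?_⟩
  obtain ⟨C, hC⟩ := exists_eventually_norm_taylorTerm_le hk α (W := ball s₀ 1)
    (R := ‖s₀‖ + 1) (σ := s₀.re - 1) fun s hs => by
      rw [mem_ball_iff_norm] at hs
      have hre := (abs_le.mp ((abs_re_le_norm (s - s₀)).trans hs.le)).1
      rw [sub_re] at hre
      exact ⟨by linarith [norm_le_norm_add_norm_sub' s s₀], by linarith⟩
  exact tendstoUniformlyOn_tsum_of_cofinite_eventually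
    ((summable_pow_div_factorial_mul_prod_div_pow (by rwa [abs_abs]) _).mul_left C) hC

lemma differentiableAt_taylorTerm (k : ℕ) (α : ℝ) (n : ℕ) {s : ℂ} (hs : s + n ≠ 1) :
    DifferentiableAt ℂ (fun s => taylorTerm k α s n) s :=
  ((differentiableAt_const _).mul (DifferentiableAt.fun_finsetProd fun _ _ =>
    differentiableAt_id.add_const _)).mul
    ((differentiableAt_zetaTail k hs).comp s (differentiableAt_id.add_const _))

lemma differentiableOn_tsum_taylorTerm {k : ℕ} (hk : 1 ≤ k) {α : ℝ} (hα : |α| < k) :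
    DifferentiableOn ℂ (fun s => ∑' n, taylorTerm k α s n) (Int.cast '' Set.Iic 1)ᶜ := by
  refine (tendstoLocallyUniformly_taylorTerm hk hα).tendstoLocallyUniformlyOn.differentiableOn
    (Eventually.of_forall fun t => DifferentiableOn.fun_sum fun n _ s hs => ?_)
    (isOpen_compl_image_intCast _)
  refine (differentiableAt_taylorTerm k α n fun h => hs ⟨1 - n, by simp, ?_⟩
    ).differentiableWithinAt
  push_cast
  linear_combination -h

lemma hasSum_taylorTerm_of_one_lt_re {k : ℕ} (hk : 1 ≤ k) {α : ℝ} (hα0 : 0 ≤ α) (hα1 : α < 1)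
    {s : ℂ} (hs : 1 < s.re) :
    HasSum (taylorTerm k α s) (hurwitzZeta α s - ∑ n ∈ range k, ((n : ℂ) + α) ^ (-s)) := by
  let f : ℕ × ℕ → ℂ := fun p => (-(α : ℂ)) ^ p.1 / (p.1 ! : ℂ) * (∏ j ∈ range p.1, (s + j)) *
    ((p.2 + k : ℕ) : ℂ) ^ (-(s + p.1))
  have hrow (n : ℕ) : HasSum (fun m => f (n, m)) (taylorTerm k α s n) := by
    have hre : 1 < (s + n).re := by
      rw [add_re, natCast_re]; exact lt_add_of_lt_of_nonneg hs n.cast_nonneg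
    exact (hasSum_zetaTail hk hre).mul_left
      ((-(α : ℂ)) ^ n / (n ! : ℂ) * ∏ j ∈ range n, (s + j))
  have hcol (m : ℕ) : HasSum (fun n => f (n, m)) ((((m + k : ℕ) : ℂ) + α) ^ (-s)) := by
    have hmk : (1 : ℝ) ≤ ((m + k : ℕ) : ℝ) := by exact_mod_cast hk.trans (k.le_add_left m)
    simpa only [ofReal_natCast] using hasSum_add_cpow_neg (x := ((m + k : ℕ) : ℝ)) (z := α)
      (by rw [norm_real, Real.norm_of_nonneg hα0]; linarith) s
  have hζ : HasSum (fun m : ℕ => (((m + k : ℕ) : ℂ) + α) ^ (-s))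
      (hurwitzZeta α s - ∑ n ∈ range k, ((n : ℂ) + α) ^ (-s)) := by
    have := hasSum_hurwitzZeta_of_one_lt_re ⟨hα0, hα1.le⟩ hs
    simp only [one_div, ← cpow_neg] at this
    simpa using (hasSum_nat_add_iff' k).mpr this
  have hsum : Summable f := by
    have hαk : |(|α|)| < k := by
      rw [abs_abs, abs_of_nonneg hα0]; exact hα1.trans_le (Nat.one_le_cast.mpr hk)
    refine Summable.of_norm_bounded
      ((summable_pow_div_factorial_mul_prod_div_pow hαk ‖s‖).mul_of_nonneg
        (summable_natCast_add_rpow_neg k hs) (fun n => by positivity) fun m => by positivity)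
      fun ⟨n, m⟩ => ?_
    rw [norm_mul, norm_mul, norm_neg_ofReal_pow_div_factorial]
    calc |α| ^ n / n ! * ‖∏ j ∈ range n, (s + j)‖ * ‖((m + k : ℕ) : ℂ) ^ (-(s + n))‖
        ≤ |α| ^ n / n ! * (∏ j ∈ range n, (‖s‖ + j)) *
            (((m + k : ℕ) : ℝ) ^ (-s.re) / k ^ n) := by
          gcongr
          · exact norm_prod_add_natCast_le le_rfl n
          · exact norm_natCast_cpow_neg_add_le hk m n s
      _ = _ := by ring
  have hswap : ∑' p, f p = ∑' p : ℕ × ℕ, f p.swap := ((Equiv.prodComm ℕ ℕ).tsum_eq f).symm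
  rw [← (hsum.prod_symm.hasSum.prod_fiberwise hcol).unique hζ, ← hswap]
  exact hsum.hasSum.prod_fiberwise hrow

lemma hurwitzZeta_sub_sum_eq_tsum_taylorTerm {k : ℕ} (hk : 1 ≤ k) {α : ℝ} (hα0 : 0 < α)
    (hα1 : α < 1) {s : ℂ} (hs : s ∉ (Int.cast '' Set.Iic 1 : Set ℂ)) :
    hurwitzZeta α s - ∑ n ∈ range k, ((n : ℂ) + α) ^ (-s) = ∑' n, taylorTerm k α s n := by
  have hαk : |α| < k := by rw [abs_of_pos hα0]; exact hα1.trans_le (by exact_mod_cast hk)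
  have hbase (n : ℕ) : (n : ℂ) + α ≠ 0 :=
    ne_of_apply_ne re (by simpa using (by positivity : (0 : ℝ) < n + α).ne')
  have hlhs : DifferentiableOn ℂ (fun s => hurwitzZeta α s - ∑ n ∈ range k, ((n : ℂ) + α) ^ (-s))
      (Int.cast '' Set.Iic 1)ᶜ := fun s hs =>
    ((differentiableAt_hurwitzZeta _ fun h => hs ⟨1, Set.self_mem_Iic, by simp [h]⟩).sub
      (DifferentiableAt.fun_sum fun n _ =>
        differentiableAt_id.neg.const_cpow (Or.inl (hbase n)))).differentiableWithinAt
  have h2 : (2 : ℂ) ∉ (Int.cast '' Set.Iic 1 : Set ℂ) := by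
    rintro ⟨n, hn, h⟩
    have h2n : (n : ℝ) = 2 := by exact_mod_cast congrArg re h
    have hn1 : (n : ℝ) ≤ 1 := by exact_mod_cast hn
    linarith
  have heq : (fun s => hurwitzZeta α s - ∑ n ∈ range k, ((n : ℂ) + α) ^ (-s))
      =ᶠ[𝓝 2] fun s => ∑' n, taylorTerm k α s n := by
    filter_upwards [(isOpen_lt continuous_const continuous_re).mem_nhds
      (show (1 : ℝ) < (2 : ℂ).re by norm_num)] with s hs
    exact (hasSum_taylorTerm_of_one_lt_re hk hα0.le hα1 hs).tsum_eq.symm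
  exact (hlhs.analyticOnNhd (isOpen_compl_image_intCast _)).eqOn_of_preconnected_of_eventuallyEq
    ((differentiableOn_tsum_taylorTerm hk hαk).analyticOnNhd (isOpen_compl_image_intCast _))
    (isPreconnected_compl_image_intCast _) h2 heq hs

end HurwitzZeta

/-- Proposition 1: for `k ≥ 1`, `0 < α < 1`, and `s` not an integer `≤ 1`, the series
converges and
`ζ(s, α) = Σ_{n=0}^{k−1} (n+α)^{−s} + (ζ(s) − Σ_{ℓ=1}^{k−1} ℓ^{−s})
  + Σ_{n≥1} ((−α)^n/n!) (s)_n (ζ(s+n) − Σ_{ℓ=1}^{k−1} ℓ^{−(s+n)})`. -/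
theorem hurwitzZeta_eq_series (k : ℕ) (hk : 1 ≤ k) (α : ℝ) (hα0 : 0 < α) (hα1 : α < 1)
    (s : ℂ) (hs : ∀ n : ℤ, n ≤ 1 → s ≠ (n : ℂ)) :
    Summable (fun n : ℕ =>
        (-(α : ℂ)) ^ (n + 1) / ((n + 1).factorial : ℂ) * (∏ j ∈ Finset.range (n + 1), (s + j)) *
          (riemannZeta (s + (n + 1)) -
            ∑ ℓ ∈ Finset.Icc 1 (k - 1), (ℓ : ℂ) ^ (-(s + (n + 1))))) ∧
      hurwitzZeta (α : UnitAddCircle) s =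
        (∑ n ∈ Finset.range k, ((n : ℂ) + α) ^ (-s)) +
          (riemannZeta s - ∑ ℓ ∈ Finset.Icc 1 (k - 1), (ℓ : ℂ) ^ (-s)) +
          ∑' n : ℕ,
            (-(α : ℂ)) ^ (n + 1) / ((n + 1).factorial : ℂ) * (∏ j ∈ Finset.range (n + 1), (s + j)) *
              (riemannZeta (s + (n + 1)) -
                ∑ ℓ ∈ Finset.Icc 1 (k - 1), (ℓ : ℂ) ^ (-(s + (n + 1)))) := by
  have hsum := summable_taylorTerm hk (α := α)
    (by rw [abs_of_pos hα0]; exact hα1.trans_le (by exact_mod_cast hk)) s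
  have hterm (n : ℕ) : taylorTerm k α s (n + 1) =
      (-(α : ℂ)) ^ (n + 1) / ((n + 1).factorial : ℂ) * (∏ j ∈ Finset.range (n + 1), (s + j)) *
        (riemannZeta (s + (n + 1)) - ∑ ℓ ∈ Finset.Icc 1 (k - 1), (ℓ : ℂ) ^ (-(s + (n + 1)))) := by
    simp [taylorTerm, zetaTail]
  have hmain := hurwitzZeta_sub_sum_eq_tsum_taylorTerm hk hα0 hα1 (s := s)
    fun ⟨n, hn, h⟩ => hs n hn h.symm
  rw [hsum.tsum_eq_zero_add, tsum_congr hterm] at hmain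
  refine ⟨((summable_nat_add_iff 1).mpr hsum).congr hterm, ?_⟩
  have h0 : taylorTerm k α s 0 = riemannZeta s - ∑ ℓ ∈ Icc 1 (k - 1), (ℓ : ℂ) ^ (-s) := by
    simp [taylorTerm, zetaTail]
  rw [h0] at hmain
  linear_combination hmain
end

section
/- For all integers m ≥ 1 and q ≥ 2, ζ(−2m, 1/q) = ((−1)^m · (2m)! / (2^{2m} · π^{2m+1})) · Σ_{n=1}^{∞} sin(2πn/q) / n^{2m+1}, where the series converges absolutely. -/
open Complex Real HurwitzZeta

/-!
Split `ζ(s, a)` into its even and odd parts. At `s = -2m` with `m ≥ 1` the even part vanishes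
(a trivial zero), and the functional equation of the odd part expresses it through
`sinZeta a (2m + 1) = ∑ sin(2πna) / n^(2m+1)`, an absolutely convergent series; the constant comes
from `Γ(2m + 1) = (2m)!` and `sin(π(2m + 1)/2) = (-1)^m`.
-/

lemma Complex.sin_pi_mul_two_mul_add_one_div_two (m : ℕ) :
    Complex.sin (π * (2 * m + 1) / 2) = (-1) ^ m := by
  have : (π : ℂ) * (2 * m + 1) / 2 = ((m * π + π / 2 : ℝ) : ℂ) := by push_cast; ring
  rw [this, ← ofReal_sin, Real.sin_add_pi_div_two, Real.cos_nat_mul_pi]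
  norm_cast

lemma summable_abs_sin_div_nat_add_one_pow (x : ℝ) {k : ℕ} (hk : 2 ≤ k) :
    Summable (fun n : ℕ => |Real.sin (x * (n + 1))| / ((n : ℝ) + 1) ^ k) := by
  have hp : Summable (fun n : ℕ => 1 / ((n : ℝ) + 1) ^ k) := by
    simpa using (summable_nat_add_iff 1).mpr (Real.summable_one_div_nat_pow.mpr (by omega))
  refine hp.of_nonneg_of_le (fun n => by positivity) (fun n => ?_)
  gcongr
  exact abs_sin_le_one _

namespace HurwitzZeta

lemma hurwitzZeta_neg_two_mul_eq_hurwitzZetaOdd (a : UnitAddCircle) {m : ℕ} (hm : m ≠ 0) :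
    hurwitzZeta a (-(2 * m)) = hurwitzZetaOdd a (-(2 * m)) := by
  obtain ⟨k, rfl⟩ := Nat.exists_eq_succ_of_ne_zero hm
  have heven : hurwitzZetaEven a (-(2 * (k + 1 : ℕ))) = 0 := by
    simpa using hurwitzZetaEven_neg_two_mul_nat_add_one a k
  rw [hurwitzZeta, heven, zero_add]

lemma hurwitzZetaOdd_neg_two_mul (a : UnitAddCircle) (m : ℕ) :
    hurwitzZetaOdd a (-(2 * m)) =
      (-1) ^ m * ((2 * m).factorial : ℂ) / (2 ^ (2 * m) * π ^ (2 * m + 1)) *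
        sinZeta a (2 * m + 1) := by
  have hpole (n : ℕ) : (2 * m + 1 : ℂ) ≠ -n := by
    exact_mod_cast (by omega : ((2 * m + 1 : ℕ) : ℤ) ≠ -n)
  have hGamma : Complex.Gamma (2 * m + 1) = (2 * m).factorial := by
    exact_mod_cast Complex.Gamma_nat_eq_factorial (2 * m)
  have hπ : (π : ℂ) ≠ 0 := ofReal_ne_zero.mpr pi_ne_zero
  rw [(by ring : -(2 * m : ℂ) = 1 - (2 * m + 1)), hurwitzZetaOdd_one_sub a hpole, hGamma,
    sin_pi_mul_two_mul_add_one_div_two,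
    (by push_cast; ring : (2 * m + 1 : ℂ) = (2 * m + 1 : ℕ)), cpow_neg, cpow_natCast]
  field_simp
  ring

lemma sinZeta_natCast_eq_tsum (x : ℝ) {k : ℕ} (hk : 2 ≤ k) :
    sinZeta x k = ∑' n : ℕ, ((Real.sin (2 * π * x * (n + 1)) / ((n : ℝ) + 1) ^ k : ℝ) : ℂ) := by
  have hsum := hasSum_nat_sinZeta x (s := k) (by rw [natCast_re]; exact_mod_cast hk)
  rw [← hsum.tsum_eq, hsum.summable.tsum_eq_zero_add]
  simp [cpow_natCast, zero_pow (by omega : k ≠ 0)]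

end HurwitzZeta

theorem hurwitzZeta_neg_two_mul_inv_q_general (m : ℕ) (hm : 1 ≤ m) (q : ℕ) :
    Summable (fun n : ℕ =>
        |Real.sin (2 * π * (n + 1) / q)| / ((n : ℝ) + 1) ^ (2 * m + 1)) ∧
      hurwitzZeta ((1 / q : ℝ) : UnitAddCircle) (-(2 * m : ℂ)) =
        ((-1 : ℂ) ^ m * ((2 * m).factorial : ℂ) / (2 ^ (2 * m) * (π : ℂ) ^ (2 * m + 1))) *
          ∑' n : ℕ, ((Real.sin (2 * π * (n + 1) / q) / ((n : ℝ) + 1) ^ (2 * m + 1) : ℝ) : ℂ) := by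
  have hangle (n : ℕ) : 2 * π * (n + 1) / q = 2 * π * (1 / q) * (n + 1) := by ring
  simp only [hangle]
  refine ⟨summable_abs_sin_div_nat_add_one_pow _ (by omega), ?_⟩
  rw [hurwitzZeta_neg_two_mul_eq_hurwitzZetaOdd _ (by omega), hurwitzZetaOdd_neg_two_mul,
    ← sinZeta_natCast_eq_tsum _ (by omega)]
  norm_num

/-- Proposition 4 I): for integers `m ≥ 1` and `q ≥ 2`,
`ζ(−2m, 1/q) = ((−1)^m (2m)!/(2^{2m} π^{2m+1})) Σ_{n≥1} sin(2πn/q)/n^{2m+1}`,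
and the series converges absolutely. -/
theorem hurwitzZeta_neg_two_mul_inv_q (m : ℕ) (hm : 1 ≤ m) (q : ℕ) (hq : 2 ≤ q) :
    Summable (fun n : ℕ =>
        |Real.sin (2 * π * (n + 1) / q)| / ((n : ℝ) + 1) ^ (2 * m + 1)) ∧
      hurwitzZeta ((1 / q : ℝ) : UnitAddCircle) (-(2 * m : ℂ)) =
        ((-1 : ℂ) ^ m * ((2 * m).factorial : ℂ) / (2 ^ (2 * m) * (π : ℂ) ^ (2 * m + 1))) *
          ∑' n : ℕ, ((Real.sin (2 * π * (n + 1) / q) / ((n : ℝ) + 1) ^ (2 * m + 1) : ℝ) : ℂ) :=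
  hurwitzZeta_neg_two_mul_inv_q_general m hm q
end
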